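/- arXiv:1412.2464 — 3 statements merged into one kernel-verified Lean document; each statement's English description precedes it below -/
import Mathlib

section
/- The points p₁ = (0,0,−a_ε) and p₂ = (0,0,a_ε) satisfy p₁ ∈ B₁, p₂ ∈ B₂, and they are fixed points of the combined reflections: R₁(R₂(p₁)) = p₁ and R₂(R₁(p₂)) = p₂. -/
open Real

noncomputable section

abbrev E3 := EuclideanSpace ℝ (Fin 3)

def pt (a b c : ℝ) : E3 := WithLp.toLp 2 ![a, b, c]

/-- Inversion (reflection) across the sphere of center `c` and radius `r`. -/
def sphRefl (c : E3) (r : ℝ) (x : E3) : E3 :=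
  (r ^ 2 / ‖x - c‖ ^ 2) • (x - c) + c

/-! On the axis, the inversion in the sphere of center `c` and radius `r` is the one-dimensional
inversion `z ↦ c + r² / (z - c)`, and when `r² = c² - a²` it maps `a` to `-a` and `-a` to `a`
(`±a` are the limit points of the coaxal family of such spheres). The constants are chosen so that
`c₁² - a_ε² = r₁²` and `c₂² - a_ε² = r₂²`, so `R₁` and `R₂` both swap `±a_ε`. -/

lemma pt_sub_pt (z c : ℝ) : pt 0 0 z - pt 0 0 c = pt 0 0 (z - c) := by
  ext i; fin_cases i <;> simp [pt]

lemma norm_pt (z : ℝ) : ‖pt 0 0 z‖ = |z| := by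
  simp [EuclideanSpace.norm_eq, pt, Fin.sum_univ_three, Real.sqrt_sq_eq_abs]

lemma dist_pt (z c : ℝ) : dist (pt 0 0 z) (pt 0 0 c) = |z - c| := by
  rw [dist_eq_norm, pt_sub_pt, norm_pt]

lemma sphRefl_pt {z c : ℝ} (r : ℝ) (h : z ≠ c) :
    sphRefl (pt 0 0 c) r (pt 0 0 z) = pt 0 0 (c + r ^ 2 / (z - c)) := by
  have hzc : z - c ≠ 0 := sub_ne_zero.mpr h
  rw [sphRefl, pt_sub_pt, norm_pt, sq_abs]
  ext i; fin_cases i <;> simp [pt]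
  field_simp
  ring

lemma sphRefl_pt_eq_neg {z c r : ℝ} (hr : r ≠ 0) (h : r ^ 2 = c ^ 2 - z ^ 2) :
    sphRefl (pt 0 0 c) r (pt 0 0 z) = pt 0 0 (-z) := by
  have hzc : z - c ≠ 0 := fun h' =>
    hr <| pow_eq_zero_iff two_ne_zero |>.mp <| by rw [h, sub_eq_zero.mp h', sub_self]
  rw [sphRefl_pt r (sub_ne_zero.mp hzc), h]
  congr 1
  field_simp
  ring

lemma pt_mem_ball {z c r : ℝ} (hr : 0 < r) (h : r ^ 2 = c ^ 2 - z ^ 2) (hzc : 0 < z * c) :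
    pt 0 0 z ∈ Metric.ball (pt 0 0 c) r := by
  have hz_sq : (z ^ 2) ^ 2 < (z * c) ^ 2 := by
    have hz : z ≠ 0 := by rintro rfl; simp at hzc
    have : (z * c) ^ 2 - (z ^ 2) ^ 2 = z ^ 2 * r ^ 2 := by rw [h]; ring
    linarith [mul_pos (sq_pos_of_ne_zero hz) (pow_pos hr 2)]
  have hz_lt : z ^ 2 < z * c := lt_of_pow_lt_pow_left₀ 2 hzc.le hz_sq
  rw [Metric.mem_ball, dist_pt, ← abs_of_pos hr, ← sq_lt_sq]
  nlinarith

theorem stmt0 (r₁ r₂ ε : ℝ) (hr₁ : 0 < r₁) (hr₂ : 0 < r₂) (hε : 0 < ε)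
    (aε c₁ c₂ : ℝ)
    (haε : aε = Real.sqrt ε * Real.sqrt ((2*r₁+ε)*(2*r₂+ε)*(2*r₁+2*r₂+ε)) / (2*(r₁+r₂+ε)))
    (hc₁ : c₁ = (r₂^2 - r₁^2 - (r₁+r₂+ε)^2) / (2*(r₁+r₂+ε)))
    (hc₂ : c₂ = c₁ + r₁ + r₂ + ε)
    (p₁ p₂ : E3) (hp₁ : p₁ = pt 0 0 (-aε)) (hp₂ : p₂ = pt 0 0 aε) :
    p₁ ∈ Metric.ball (pt 0 0 c₁) r₁ ∧ p₂ ∈ Metric.ball (pt 0 0 c₂) r₂ ∧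
    sphRefl (pt 0 0 c₁) r₁ (sphRefl (pt 0 0 c₂) r₂ p₁) = p₁ ∧
    sphRefl (pt 0 0 c₂) r₂ (sphRefl (pt 0 0 c₁) r₁ p₂) = p₂ := by
  have hs : 0 < r₁ + r₂ + ε := by linarith
  have haε_pos : 0 < aε := by rw [haε]; positivity
  have haε_sq : aε ^ 2 = ε * ((2*r₁+ε)*(2*r₂+ε)*(2*r₁+2*r₂+ε)) / (4*(r₁+r₂+ε)^2) := by
    rw [haε, div_pow, mul_pow, Real.sq_sqrt hε.le, Real.sq_sqrt (by positivity)]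
    ring
  have hc₂' : c₂ = (r₂^2 - r₁^2 + (r₁+r₂+ε)^2) / (2*(r₁+r₂+ε)) := by
    rw [hc₂, hc₁]; field_simp; ring
  have hc₁_neg : c₁ < 0 := by rw [hc₁]; exact div_neg_of_neg_of_pos (by nlinarith) (by linarith)
  have hc₂_pos : 0 < c₂ := by rw [hc₂']; exact div_pos (by nlinarith) (by linarith)
  have hkey₁ : r₁ ^ 2 = c₁ ^ 2 - aε ^ 2 := by rw [haε_sq, hc₁]; field_simp; ring
  have hkey₂ : r₂ ^ 2 = c₂ ^ 2 - aε ^ 2 := by rw [haε_sq, hc₂']; field_simp; ring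
  have hkey₁' : r₁ ^ 2 = c₁ ^ 2 - (-aε) ^ 2 := by rwa [neg_sq]
  have hkey₂' : r₂ ^ 2 = c₂ ^ 2 - (-aε) ^ 2 := by rwa [neg_sq]
  subst hp₁ hp₂
  refine ⟨pt_mem_ball hr₁ hkey₁' (by nlinarith), pt_mem_ball hr₂ hkey₂ (by positivity), ?_, ?_⟩
  · rw [sphRefl_pt_eq_neg hr₂.ne' hkey₂', neg_neg, sphRefl_pt_eq_neg hr₁.ne' hkey₁]
  · rw [sphRefl_pt_eq_neg hr₁.ne' hkey₁, sphRefl_pt_eq_neg hr₂.ne' hkey₂', neg_neg]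

end
end

section
/- One has 𝐜₁ = (0,0,−a_ε·coth ξ₁) and 𝐜₂ = (0,0,a_ε·coth ξ₂), and for every integer m ≥ 0: (R₁∘R₂)^m(𝐜₁) = (0,0,−a_ε·coth(m·s₀+ξ₁)), (R₂∘R₁)^m(𝐜₂) = (0,0,a_ε·coth(m·s₀+ξ₂)), (R₂∘R₁)^m(R₂(𝐜₁)) = (0,0,a_ε·coth((m+1)·s₀)), and (R₁∘R₂)^m(R₁(𝐜₂)) = (0,0,−a_ε·coth((m+1)·s₀)). -/
/-
Parametrize the axis by `t ↦ a coth t` with `a = aε`. The origin has the same power `a²` with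
respect to both spheres, which gives `c₁ = a coth (-ξ₁)`, `c₂ = a coth ξ₂` and `rⱼ = a / sinh ξⱼ`;
so both spheres are Apollonius spheres for the foci `±a`. Inversion in the sphere of center
`a coth ξ` and radius `a / |sinh ξ|` acts on the parameter as `t ↦ ξ - t`, hence `R₂ ∘ R₁` is the
translation `t ↦ t + s₀` and `R₁ ∘ R₂` the translation `t ↦ t - s₀`, and the orbits are
arithmetic progressions in `t`.
-/

open Real

noncomputable section

/-- The hyperbolic cotangent. -/
def coth (x : ℝ) : ℝ := Real.cosh x / Real.sinh x

lemma coth_neg (x : ℝ) : coth (-x) = -coth x := by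
  simp only [coth, cosh_neg, sinh_neg, div_neg]

lemma mul_coth_arsinh_div {a r : ℝ} (ha : a ≠ 0) (hr : 0 < r) :
    a * coth (arsinh (a / r)) = √(r ^ 2 + a ^ 2) := by
  have hr' : r ≠ 0 := hr.ne'
  rw [coth, sinh_arsinh, cosh_arsinh,
    show 1 + (a / r) ^ 2 = (r ^ 2 + a ^ 2) / r ^ 2 by field_simp, sqrt_div' _ (sq_nonneg r),
    sqrt_sq hr.le]
  field_simp

lemma pt_axis_sub (a b : ℝ) : pt 0 0 a - pt 0 0 b = pt 0 0 (a - b) := by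
  ext i; fin_cases i <;> simp [pt]

lemma pt_axis_add (a b : ℝ) : pt 0 0 a + pt 0 0 b = pt 0 0 (a + b) := by
  ext i; fin_cases i <;> simp [pt]

lemma smul_pt_axis (t a : ℝ) : t • pt 0 0 a = pt 0 0 (t * a) := by
  ext i; fin_cases i <;> simp [pt]

lemma norm_pt_axis (a : ℝ) : ‖pt 0 0 a‖ = |a| := by
  simp [EuclideanSpace.norm_eq, pt, Fin.sum_univ_three, sqrt_sq_eq_abs]

-- Also true at `z = c`, where both sides are `pt 0 0 c` since `r ^ 2 / 0 = 0`.
lemma sphRefl_axis (c r z : ℝ) :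
    sphRefl (pt 0 0 c) r (pt 0 0 z) = pt 0 0 (r ^ 2 / (z - c) + c) := by
  rw [sphRefl, pt_axis_sub, norm_pt_axis, sq_abs, smul_pt_axis, pt_axis_add]
  rcases eq_or_ne (z - c) 0 with h | h
  · simp [h]
  · field_simp

lemma sphRefl_axis_coth {a r ξ v : ℝ} (hr : r ^ 2 * sinh ξ ^ 2 = a ^ 2) (hξ : ξ ≠ 0)
    (hv : v ≠ 0) (hξv : ξ - v ≠ 0) :
    sphRefl (pt 0 0 (a * coth ξ)) r (pt 0 0 (a * coth v)) = pt 0 0 (a * coth (ξ - v)) := by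
  rw [sphRefl_axis]
  congr 1
  rw [← sinh_ne_zero] at hξ hv hξv
  rcases eq_or_ne a 0 with rfl | ha
  · simp
  have hden : a * coth v - a * coth ξ = a * sinh (ξ - v) / (sinh v * sinh ξ) := by
    rw [coth, coth, sinh_sub]; field_simp
  rw [hden, eq_div_of_mul_eq (pow_ne_zero 2 hξ) hr, coth, coth]
  field_simp
  obtain ⟨w, rfl⟩ : ∃ w, v = ξ - w := ⟨ξ - v, by ring⟩
  rw [sub_sub_cancel, sinh_sub]
  ring

lemma iterate_apply_eq_of_forall_mem {α M : Type*} [AddMonoid M] {f : α → α} {φ : M → α}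
    {S : Set M} {s : M} (h : ∀ t ∈ S, t + s ∈ S ∧ f (φ t) = φ (t + s)) {t : M} (ht : t ∈ S)
    (m : ℕ) : f^[m] (φ t) = φ (t + m • s) := by
  suffices f^[m] (φ t) = φ (t + m • s) ∧ t + m • s ∈ S from this.1
  induction m with
  | zero => simpa using ht
  | succ m ih =>
    obtain ⟨hmem, hstep⟩ := h _ ih.2
    rw [Function.iterate_succ_apply', ih.1, hstep, succ_nsmul, ← add_assoc]
    exact ⟨rfl, hmem⟩

lemma coaxal_centers {r₁ r₂ ε aε c₁ c₂ : ℝ} (hr₁ : 0 < r₁) (hr₂ : 0 < r₂) (hε : 0 < ε)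
    (haε : aε = √ε * √((2*r₁+ε)*(2*r₂+ε)*(2*r₁+2*r₂+ε)) / (2*(r₁+r₂+ε)))
    (hc₁ : c₁ = (r₂^2 - r₁^2 - (r₁+r₂+ε)^2) / (2*(r₁+r₂+ε)))
    (hc₂ : c₂ = c₁ + r₁ + r₂ + ε) :
    c₁ = -(aε * coth (arsinh (aε / r₁))) ∧ c₂ = aε * coth (arsinh (aε / r₂)) := by
  have ha : aε ≠ 0 := by rw [haε]; positivity
  have ha_sq : aε ^ 2 = ε * ((2*r₁+ε)*(2*r₂+ε)*(2*r₁+2*r₂+ε)) / (2*(r₁+r₂+ε)) ^ 2 := by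
    rw [haε, div_pow, mul_pow, sq_sqrt hε.le, sq_sqrt (by positivity)]
  have hc₂' : c₂ = (r₂^2 - r₁^2 + (r₁+r₂+ε)^2) / (2*(r₁+r₂+ε)) := by
    rw [hc₂, hc₁]; field_simp; ring
  have hc₁_sq : c₁ ^ 2 = r₁ ^ 2 + aε ^ 2 := by rw [ha_sq, hc₁]; field_simp; ring
  have hc₂_sq : c₂ ^ 2 = r₂ ^ 2 + aε ^ 2 := by rw [ha_sq, hc₂']; field_simp; ring
  have hc₁_nonpos : c₁ ≤ 0 := by
    rw [hc₁]; exact div_nonpos_of_nonpos_of_nonneg (by nlinarith) (by positivity)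
  have hc₂_nonneg : 0 ≤ c₂ := by rw [hc₂']; exact div_nonneg (by nlinarith) (by positivity)
  rw [mul_coth_arsinh_div ha hr₁, mul_coth_arsinh_div ha hr₂, ← hc₁_sq, ← hc₂_sq,
    sqrt_sq_eq_abs, sqrt_sq_eq_abs, abs_of_nonpos hc₁_nonpos, abs_of_nonneg hc₂_nonneg, neg_neg]
  exact ⟨rfl, rfl⟩

theorem stmt1 (r₁ r₂ ε : ℝ) (hr₁ : 0 < r₁) (hr₂ : 0 < r₂) (hε : 0 < ε)
    (aε c₁ c₂ ξ₁ ξ₂ s₀ : ℝ)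
    (haε : aε = Real.sqrt ε * Real.sqrt ((2*r₁+ε)*(2*r₂+ε)*(2*r₁+2*r₂+ε)) / (2*(r₁+r₂+ε)))
    (hc₁ : c₁ = (r₂^2 - r₁^2 - (r₁+r₂+ε)^2) / (2*(r₁+r₂+ε)))
    (hc₂ : c₂ = c₁ + r₁ + r₂ + ε)
    (hξ₁ : ξ₁ = Real.arsinh (aε / r₁)) (hξ₂ : ξ₂ = Real.arsinh (aε / r₂))
    (hs₀ : s₀ = ξ₁ + ξ₂)
    (R₁ R₂ : E3 → E3)
    (hR₁ : R₁ = sphRefl (pt 0 0 c₁) r₁) (hR₂ : R₂ = sphRefl (pt 0 0 c₂) r₂) :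
    pt 0 0 c₁ = pt 0 0 (-(aε * coth ξ₁)) ∧
    pt 0 0 c₂ = pt 0 0 (aε * coth ξ₂) ∧
    ∀ m : ℕ,
      (R₁ ∘ R₂)^[m] (pt 0 0 c₁) = pt 0 0 (-(aε * coth (m * s₀ + ξ₁))) ∧
      (R₂ ∘ R₁)^[m] (pt 0 0 c₂) = pt 0 0 (aε * coth (m * s₀ + ξ₂)) ∧
      (R₂ ∘ R₁)^[m] (R₂ (pt 0 0 c₁)) = pt 0 0 (aε * coth ((m + 1) * s₀)) ∧
      (R₁ ∘ R₂)^[m] (R₁ (pt 0 0 c₂)) = pt 0 0 (-(aε * coth ((m + 1) * s₀))) := by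
  obtain ⟨hc₁', hc₂'⟩ := coaxal_centers hr₁ hr₂ hε haε hc₁ hc₂
  rw [← hξ₁] at hc₁'
  rw [← hξ₂] at hc₂'
  have ha : 0 < aε := by rw [haε]; positivity
  have hξ₁_pos : 0 < ξ₁ := by rw [hξ₁]; exact arsinh_pos_iff.2 (by positivity)
  have hξ₂_pos : 0 < ξ₂ := by rw [hξ₂]; exact arsinh_pos_iff.2 (by positivity)
  have hs₀_pos : 0 < s₀ := by rw [hs₀]; positivity
  have hr₁_sinh : r₁ ^ 2 * sinh (-ξ₁) ^ 2 = aε ^ 2 := by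
    rw [sinh_neg, neg_sq, hξ₁, sinh_arsinh]; field_simp
  have hr₂_sinh : r₂ ^ 2 * sinh ξ₂ ^ 2 = aε ^ 2 := by
    rw [hξ₂, sinh_arsinh]; field_simp
  have hR₁_coth (t : ℝ) (ht : 0 < t) :
      R₁ (pt 0 0 (aε * coth t)) = pt 0 0 (-(aε * coth (t + ξ₁))) := by
    rw [hR₁, hc₁', ← mul_neg, ← coth_neg, ← mul_neg, ← coth_neg,
      sphRefl_axis_coth hr₁_sinh (by linarith) ht.ne' (by linarith), neg_add', neg_sub_comm]
  have hR₂_coth (t : ℝ) (ht : 0 < t) :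
      R₂ (pt 0 0 (-(aε * coth t))) = pt 0 0 (aε * coth (t + ξ₂)) := by
    rw [hR₂, hc₂', ← mul_neg, ← coth_neg,
      sphRefl_axis_coth hr₂_sinh hξ₂_pos.ne' (by linarith) (by linarith), sub_neg_eq_add, add_comm]
  have h₂₁ : ∀ t ∈ Set.Ioi (0 : ℝ), t + s₀ ∈ Set.Ioi 0 ∧
      (R₂ ∘ R₁) (pt 0 0 (aε * coth t)) = pt 0 0 (aε * coth (t + s₀)) := fun t (ht : 0 < t) ↦
    ⟨by simp only [Set.mem_Ioi]; linarith, by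
      rw [Function.comp_apply, hR₁_coth t ht, hR₂_coth _ (by linarith), hs₀, add_assoc]⟩
  have h₁₂ : ∀ t ∈ Set.Ioi (0 : ℝ), t + s₀ ∈ Set.Ioi 0 ∧
      (R₁ ∘ R₂) (pt 0 0 (-(aε * coth t))) = pt 0 0 (-(aε * coth (t + s₀))) := fun t (ht : 0 < t) ↦
    ⟨by simp only [Set.mem_Ioi]; linarith, by
      rw [Function.comp_apply, hR₂_coth t ht, hR₁_coth _ (by linarith), hs₀, add_assoc,
        add_comm ξ₂]⟩
  refine ⟨congrArg _ hc₁', congrArg _ hc₂', fun m ↦ ⟨?_, ?_, ?_, ?_⟩⟩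
  · rw [hc₁', iterate_apply_eq_of_forall_mem (φ := fun t ↦ pt 0 0 (-(aε * coth t))) h₁₂ hξ₁_pos m,
      nsmul_eq_mul, add_comm]
  · rw [hc₂', iterate_apply_eq_of_forall_mem (φ := fun t ↦ pt 0 0 (aε * coth t)) h₂₁ hξ₂_pos m,
      nsmul_eq_mul, add_comm]
  · rw [hc₁', hR₂_coth ξ₁ hξ₁_pos, ← hs₀,
      iterate_apply_eq_of_forall_mem (φ := fun t ↦ pt 0 0 (aε * coth t)) h₂₁ hs₀_pos m,
      nsmul_eq_mul, add_one_mul, add_comm]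
  · rw [hc₂', hR₁_coth ξ₂ hξ₂_pos, add_comm, ← hs₀,
      iterate_apply_eq_of_forall_mem (φ := fun t ↦ pt 0 0 (-(aε * coth t))) h₁₂ hs₀_pos m,
      nsmul_eq_mul, add_one_mul, add_comm]

end
end

section
/- Let a > 0 and ξ₀ ∈ ℝ, ξ₀ ≠ 0. For every x = (x₁,x₂,x₃) ∈ ℝ³ with z := x₃ + i·|(x₁,x₂)| ∉ {a, −a}, letting (ξ,θ) be the bispherical coordinates of x, one has |x − (0,0,a·coth ξ₀)| = (a/sinh|ξ₀|)·w_θ(ξ − 2ξ₀)/w_θ(ξ). -/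
open Real

noncomputable section

/-- `w θ ξ = √(cosh ξ − cos θ)`. -/
def w (θ ξ : ℝ) : ℝ := Real.sqrt (Real.cosh ξ - Real.cos θ)

/-!
Solving `e^{ξ - iθ} = (z + a)/(z - a)` for `z` gives `z = a (sinh ξ + i sin θ)/(cosh ξ - cos θ)`,
where `cosh ξ - cos θ = |e^{ξ - iθ} - 1|² / (2 e^ξ)` is positive because `a ≠ 0`. The distance from
`x` to a point `(0, 0, h)` of the axis is `|z - h|`, and for `h = a coth ξ₀` the claim reduces to the
polynomial identity
`|(sinh ξ + i sin θ) sinh ξ₀ - cosh ξ₀ (cosh ξ - cos θ)|² = (cosh ξ - cos θ)(cosh (ξ - 2ξ₀) - cos θ)`.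
-/

lemma add_div_sub_ne_one {K : Type*} [Field K] [CharZero K] {z a : K} (ha : a ≠ 0)
    (hza : z ≠ a) : (z + a) / (z - a) ≠ 1 := by
  rw [Ne, div_eq_one_iff_eq (sub_ne_zero.2 hza)]
  intro h
  exact ha (by linear_combination h / 2)

lemma exp_ofReal_sub_ofReal_mul_I (ξ θ : ℝ) :
    Complex.exp (ξ - θ * Complex.I) =
      (Real.cosh ξ + Real.sinh ξ) * (Real.cos θ - Real.sin θ * Complex.I) := by
  push_cast
  rw [sub_eq_add_neg, Complex.exp_add, ← neg_mul, Complex.exp_mul_I, Complex.cosh_add_sinh,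
    Complex.cos_neg, Complex.sin_neg, neg_mul, ← sub_eq_add_neg]

lemma normSq_exp_sub_mul_I_sub_one (ξ θ : ℝ) :
    Complex.normSq (Complex.exp (ξ - θ * Complex.I) - 1) =
      2 * Real.exp ξ * (Real.cosh ξ - Real.cos θ) := by
  have hre_im : Complex.exp (ξ - θ * Complex.I) - 1 =
      ((Real.exp ξ * Real.cos θ - 1 : ℝ) : ℂ) + ((-(Real.exp ξ * Real.sin θ)) : ℝ) * Complex.I := by
    rw [exp_ofReal_sub_ofReal_mul_I, ← Real.cosh_add_sinh]
    push_cast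
    ring
  rw [hre_im, Complex.normSq_add_mul_I, ← Real.cosh_add_sinh]
  linear_combination (Real.cosh ξ + Real.sinh ξ) ^ 2 * Real.sin_sq_add_cos_sq θ
    - Real.cosh_sq_sub_sinh_sq ξ

lemma cosh_sub_cos_nonneg (ξ θ : ℝ) : 0 ≤ Real.cosh ξ - Real.cos θ := by
  linarith [Real.one_le_cosh ξ, Real.cos_le_one θ]

lemma cosh_sub_cos_pos {ξ θ : ℝ} (h : Complex.exp (ξ - θ * Complex.I) ≠ 1) :
    0 < Real.cosh ξ - Real.cos θ := by
  have hpos : 0 < Complex.normSq (Complex.exp (ξ - θ * Complex.I) - 1) :=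
    Complex.normSq_pos.2 (sub_ne_zero.2 h)
  rw [normSq_exp_sub_mul_I_sub_one] at hpos
  exact pos_of_mul_pos_right hpos (by positivity)

lemma mul_cosh_sub_cos_of_exp_eq {z : ℂ} {a ξ θ : ℝ} (hza : z ≠ a)
    (h : Complex.exp (ξ - θ * Complex.I) = (z + a) / (z - a)) :
    z * (Real.cosh ξ - Real.cos θ : ℝ) = a * (Real.sinh ξ + Real.sin θ * Complex.I) := by
  rw [Complex.ofReal_sub]
  rw [exp_ofReal_sub_ofReal_mul_I, eq_div_iff (sub_ne_zero.2 hza)] at h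
  have hCS : (Real.cosh ξ : ℂ) ^ 2 - (Real.sinh ξ : ℂ) ^ 2 = 1 := by
    exact_mod_cast Real.cosh_sq_sub_sinh_sq ξ
  have hsc : (Real.sin θ : ℂ) ^ 2 + (Real.cos θ : ℂ) ^ 2 = 1 := by
    exact_mod_cast Real.sin_sq_add_cos_sq θ
  set C : ℂ := ↑(Real.cosh ξ)
  set S : ℂ := ↑(Real.sinh ξ)
  set c : ℂ := ↑(Real.cos θ)
  set s : ℂ := ↑(Real.sin θ)
  -- `(C + S)(C - S) = 1`, so this multiplies `h` by `(conj e^{ξ - iθ} - 1)/(2 e^ξ)`.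
  linear_combination ((C + S) * (c + s * Complex.I) - 1) * (C - S) / 2 * h
    - (C - S) / 2 * (C + S) ^ 2 * (z - a) * hsc
    + (C - S) / 2 * (C + S) ^ 2 * s ^ 2 * (z - a) * Complex.I_sq
    - ((C + S) * (z - a) - 2 * c * z - 2 * s * Complex.I * a) / 2 * hCS

lemma normSq_sinh_add_sin_mul_I_mul_sinh_sub (ξ θ ξ₀ : ℝ) :
    Complex.normSq ((Real.sinh ξ + Real.sin θ * Complex.I) * Real.sinh ξ₀ -
        Real.cosh ξ₀ * (Real.cosh ξ - Real.cos θ : ℝ)) =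
      (Real.cosh ξ - Real.cos θ) * (Real.cosh (ξ - 2 * ξ₀) - Real.cos θ) := by
  have hre_im : (Real.sinh ξ + Real.sin θ * Complex.I) * Real.sinh ξ₀ -
      Real.cosh ξ₀ * (Real.cosh ξ - Real.cos θ : ℝ) =
      ((Real.sinh ξ * Real.sinh ξ₀ - Real.cosh ξ₀ * (Real.cosh ξ - Real.cos θ) : ℝ) : ℂ) +
        ((Real.sin θ * Real.sinh ξ₀ : ℝ) : ℂ) * Complex.I := by
    push_cast
    ring
  rw [hre_im, Complex.normSq_add_mul_I, Real.cosh_sub, Real.cosh_two_mul, Real.sinh_two_mul]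
  linear_combination (-Real.sinh ξ₀ ^ 2) * Real.cosh_sq_sub_sinh_sq ξ
    + (Real.cos θ ^ 2 - Real.cos θ * Real.cosh ξ) * Real.cosh_sq_sub_sinh_sq ξ₀
    + Real.sinh ξ₀ ^ 2 * Real.sin_sq_add_cos_sq θ

lemma norm_sinh_add_sin_mul_I_mul_sinh_sub (ξ θ ξ₀ : ℝ) :
    ‖(Real.sinh ξ + Real.sin θ * Complex.I) * Real.sinh ξ₀ -
        Real.cosh ξ₀ * (Real.cosh ξ - Real.cos θ : ℝ)‖ = w θ ξ * w θ (ξ - 2 * ξ₀) := by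
  rw [Complex.norm_def, normSq_sinh_add_sin_mul_I_mul_sinh_sub,
    Real.sqrt_mul (cosh_sub_cos_nonneg ξ θ), w, w]

lemma norm_sub_pt_zero_zero (x : E3) (h : ℝ) :
    ‖x - pt 0 0 h‖ = ‖(x 2 : ℂ) + (Real.sqrt (x 0 ^ 2 + x 1 ^ 2) : ℝ) * Complex.I - h‖ := by
  rw [EuclideanSpace.norm_eq, Fin.sum_univ_three, Complex.norm_def, add_sub_right_comm,
    ← Complex.ofReal_sub, Complex.normSq_add_mul_I, Real.sq_sqrt (by positivity)]
  simp only [pt, PiLp.sub_apply, Matrix.cons_val_zero, Matrix.cons_val_one, Matrix.cons_val,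
    sub_zero, Real.norm_eq_abs, sq_abs]
  rw [add_comm]

lemma sub_mul_cosh_div_sinh_eq {z : ℂ} {a ξ₀ D : ℝ} (hsh : Real.sinh ξ₀ ≠ 0) (hD : D ≠ 0) {W : ℂ}
    (hzD : z * D = a * W) :
    z - ↑(a * (Real.cosh ξ₀ / Real.sinh ξ₀)) =
      (a / (Real.sinh ξ₀ * D) : ℝ) * (W * Real.sinh ξ₀ - Real.cosh ξ₀ * D) := by
  have : (D : ℂ) ≠ 0 := by exact_mod_cast hD
  have : (Real.sinh ξ₀ : ℂ) ≠ 0 := by exact_mod_cast hsh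
  simp only [Complex.ofReal_mul, Complex.ofReal_div]
  field_simp
  linear_combination (Real.sinh ξ₀ : ℂ) * hzD

theorem stmt2_general (a ξ₀ : ℝ) (ha : 0 < a) (hξ₀ : ξ₀ ≠ 0)
    (x : E3) (ξ θ : ℝ)
    (z : ℂ)
    (hz : z = (x 2 : ℂ) + (Real.sqrt ((x 0) ^ 2 + (x 1) ^ 2) : ℝ) * Complex.I)
    (hza : z ≠ (a : ℂ))
    (hbisph : Complex.exp ((ξ : ℂ) - (θ : ℂ) * Complex.I) = (z + a) / (z - a)) :
    ‖x - pt 0 0 (a * (Real.cosh ξ₀ / Real.sinh ξ₀))‖ =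
      (a / Real.sinh |ξ₀|) * w θ (ξ - 2 * ξ₀) / w θ ξ := by
  have hexp : Complex.exp ((ξ : ℂ) - (θ : ℂ) * Complex.I) ≠ 1 :=
    hbisph ▸ add_div_sub_ne_one (by exact_mod_cast ha.ne') hza
  have hD : 0 < Real.cosh ξ - Real.cos θ := cosh_sub_cos_pos hexp
  rw [norm_sub_pt_zero_zero, ← hz,
    sub_mul_cosh_div_sinh_eq (Real.sinh_ne_zero.2 hξ₀) hD.ne' (mul_cosh_sub_cos_of_exp_eq hza hbisph),
    norm_mul, norm_sinh_add_sin_mul_I_mul_sinh_sub, Complex.norm_real, Real.norm_eq_abs,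
    abs_div, abs_mul, abs_of_pos ha, abs_of_pos hD, ← Real.abs_sinh,
    ← Real.sq_sqrt hD.le, ← w]
  have : 0 < w θ ξ := Real.sqrt_pos.2 hD
  field_simp

theorem stmt2 (a ξ₀ : ℝ) (ha : 0 < a) (hξ₀ : ξ₀ ≠ 0)
    (x : E3) (ξ θ : ℝ) (hθ : θ ∈ Set.Icc 0 Real.pi)
    (z : ℂ)
    (hz : z = (x 2 : ℂ) + (Real.sqrt ((x 0) ^ 2 + (x 1) ^ 2) : ℝ) * Complex.I)
    (hza : z ≠ (a : ℂ)) (hza' : z ≠ -(a : ℂ))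
    (hbisph : Complex.exp ((ξ : ℂ) - (θ : ℂ) * Complex.I) = (z + a) / (z - a)) :
    ‖x - pt 0 0 (a * (Real.cosh ξ₀ / Real.sinh ξ₀))‖ =
      (a / Real.sinh |ξ₀|) * w θ (ξ - 2 * ξ₀) / w θ ξ :=
  stmt2_general a ξ₀ ha hξ₀ x ξ θ z hz hza hbisph
end
end
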